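/- arXiv:1203.5743 — 6 statements merged into one kernel-verified Lean document; each statement's English description precedes it below -/
import Mathlib

section
/- Let F be a field, k ≥ 1 an integer, a_0,…,a_k, b_0,…,b_k ∈ F and g_n : F → F functions for n ≥ 0. Suppose ρ ∈ F is nonzero and is a common root of P and Q, i.e. P(ρ) = 0 and Q(ρ) = 0. If (x_n)_{n ≥ −k} is a solution of equation (★), then the sequence t_n := x_n − ρ x_{n−1} (defined for n ≥ −k+1) satisfies the factor equation (FE) with root ρ for all n ≥ 0, and x_{n+1} = ρ x_n + t_{n+1} for all n ≥ 0. -/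
open Finset Polynomial

/-- The polynomial `P(u) = u^(k+1) - ∑_{i=0}^{k} a_i u^(k-i)`. -/
noncomputable def polyP {F : Type*} [Field F] (k : ℕ) (a : ℕ → F) : Polynomial F :=
  X ^ (k + 1) - ∑ i ∈ range (k + 1), C (a i) * X ^ (k - i)

/-- The polynomial `Q(u) = ∑_{i=0}^{k} b_i u^(k-i)`. -/
noncomputable def polyQ {F : Type*} [Field F] (k : ℕ) (b : ℕ → F) : Polynomial F :=
  ∑ i ∈ range (k + 1), C (b i) * X ^ (k - i)

/-- `p_i = ρ^(i+1) - a_0 ρ^i - a_1 ρ^(i-1) - ⋯ - a_i`. -/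
def coefp {F : Type*} [Field F] (a : ℕ → F) (ρ : F) (i : ℕ) : F :=
  ρ ^ (i + 1) - ∑ m ∈ range (i + 1), a m * ρ ^ (i - m)

/-- `q_i = b_0 ρ^i + b_1 ρ^(i-1) + ⋯ + b_i`. -/
def coefq {F : Type*} [Field F] (b : ℕ → F) (ρ : F) (i : ℕ) : F :=
  ∑ m ∈ range (i + 1), b m * ρ ^ (i - m)

/-- A sequence `x : ℤ → F` is a solution of equation (★):
`x_{n+1} = ∑_{i=0}^{k} a_i x_{n-i} + g_n (∑_{i=0}^{k} b_i x_{n-i})` for all `n ≥ 0`. -/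
def IsSolutionStar {F : Type*} [Field F] (k : ℕ) (a b : ℕ → F) (g : ℤ → F → F)
    (x : ℤ → F) : Prop :=
  ∀ n : ℤ, 0 ≤ n →
    x (n + 1) = (∑ i ∈ range (k + 1), a i * x (n - i)) +
      g n (∑ i ∈ range (k + 1), b i * x (n - i))

/-- A sequence `t : ℤ → F` is a solution of the factor equation (FE) with root `ρ`:
`t_{n+1} = -∑_{i=0}^{k-1} p_i t_{n-i} + g_n (∑_{i=0}^{k-1} q_i t_{n-i})` for all `n ≥ 0`. -/
def IsSolutionFE {F : Type*} [Field F] (k : ℕ) (a b : ℕ → F) (g : ℤ → F → F) (ρ : F)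
    (t : ℤ → F) : Prop :=
  ∀ n : ℤ, 0 ≤ n →
    t (n + 1) = -(∑ i ∈ range k, coefp a ρ i * t (n - i)) +
      g n (∑ i ∈ range k, coefq b ρ i * t (n - i))

section Aux

variable {F : Type*} [Field F] (a b : ℕ → F) (ρ : F)

lemma coefp_succ (i : ℕ) : coefp a ρ (i + 1) = ρ * coefp a ρ i - a (i + 1) := by
  unfold coefp
  rw [Finset.sum_range_succ]
  have h : ∀ m ∈ range (i + 1), a m * ρ ^ (i + 1 - m) = ρ * (a m * ρ ^ (i - m)) := by
    intro m hm
    rw [Finset.mem_range] at hm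
    have : i + 1 - m = (i - m) + 1 := by omega
    rw [this]; ring
  rw [Finset.sum_congr rfl h, ← Finset.mul_sum]
  simp [Nat.sub_self]
  ring

lemma coefq_succ (i : ℕ) : coefq b ρ (i + 1) = ρ * coefq b ρ i + b (i + 1) := by
  unfold coefq
  rw [Finset.sum_range_succ]
  have h : ∀ m ∈ range (i + 1), b m * ρ ^ (i + 1 - m) = ρ * (b m * ρ ^ (i - m)) := by
    intro m hm
    rw [Finset.mem_range] at hm
    have : i + 1 - m = (i - m) + 1 := by omega
    rw [this]; ring
  rw [Finset.sum_congr rfl h, ← Finset.mul_sum]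
  simp [Nat.sub_self]

lemma telescope_p (K : ℕ) (y : ℕ → F) :
    ∑ i ∈ range K, coefp a ρ i * (y i - ρ * y (i + 1)) =
      ρ * y 0 - (∑ j ∈ range (K + 1), a j * y j) - coefp a ρ K * y K := by
  induction K with
  | zero => simp [coefp]; ring
  | succ K ih =>
    rw [Finset.sum_range_succ, ih, Finset.sum_range_succ (n := K + 1), coefp_succ]
    ring

lemma telescope_q (K : ℕ) (y : ℕ → F) :
    ∑ i ∈ range K, coefq b ρ i * (y i - ρ * y (i + 1)) =
      (∑ j ∈ range (K + 1), b j * y j) - coefq b ρ K * y K := by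
  induction K with
  | zero => simp [coefq]
  | succ K ih =>
    rw [Finset.sum_range_succ, ih, Finset.sum_range_succ (n := K + 1), coefq_succ]
    ring

lemma evalP (k : ℕ) : (polyP k a).eval ρ = coefp a ρ k := by
  simp [polyP, coefp, Polynomial.eval_finset_sum]

lemma evalQ (k : ℕ) : (polyQ k b).eval ρ = coefq b ρ k := by
  simp [polyQ, coefq, Polynomial.eval_finset_sum]

end Aux

/-- if `ρ ≠ 0` is a common root of `P` and `Q` and `x` solves (★), then
`t_n := x_n - ρ x_{n-1}` solves the factor equation (FE) with root `ρ`, and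
`x_{n+1} = ρ x_n + t_{n+1}` for all `n ≥ 0`. -/
theorem statement0 {F : Type*} [Field F] (k : ℕ) (hk : 1 ≤ k)
    (a b : ℕ → F) (g : ℤ → F → F) (ρ : F) (hρ : ρ ≠ 0)
    (hP : (polyP k a).eval ρ = 0) (hQ : (polyQ k b).eval ρ = 0)
    (x : ℤ → F) (hx : IsSolutionStar k a b g x) :
    IsSolutionFE k a b g ρ (fun n => x n - ρ * x (n - 1)) ∧
      ∀ n : ℤ, 0 ≤ n → x (n + 1) = ρ * x n + (x (n + 1) - ρ * x n) := by
  rw [evalP] at hP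
  rw [evalQ] at hQ
  refine ⟨?_, fun n _ => by ring⟩
  intro n hn
  have hy : ∀ i : ℕ, (fun n => x n - ρ * x (n - 1)) (n - (i : ℤ)) =
      (fun i : ℕ => x (n - (i : ℤ))) i - ρ * (fun i : ℕ => x (n - (i : ℤ))) (i + 1) := by
    intro i
    simp only
    congr 2
    push_cast
    ring
  have hp := telescope_p a ρ k (fun i : ℕ => x (n - (i : ℤ)))
  have hq := telescope_q b ρ k (fun i : ℕ => x (n - (i : ℤ)))
  rw [hP, zero_mul, sub_zero] at hp
  rw [hQ, zero_mul, sub_zero] at hq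
  have e1 : ∑ i ∈ range k, coefp a ρ i * ((fun n => x n - ρ * x (n - 1)) (n - (i : ℤ))) =
      ρ * x n - ∑ j ∈ range (k + 1), a j * x (n - (j : ℤ)) := by
    calc _ = ∑ i ∈ range k, coefp a ρ i *
          ((fun i : ℕ => x (n - (i : ℤ))) i - ρ * (fun i : ℕ => x (n - (i : ℤ))) (i + 1)) := by
            exact Finset.sum_congr rfl fun i _ => by rw [hy i]
      _ = _ := by rw [hp]; simp
  have e2 : ∑ i ∈ range k, coefq b ρ i * ((fun n => x n - ρ * x (n - 1)) (n - (i : ℤ))) =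
      ∑ j ∈ range (k + 1), b j * x (n - (j : ℤ)) := by
    calc _ = ∑ i ∈ range k, coefq b ρ i *
          ((fun i : ℕ => x (n - (i : ℤ))) i - ρ * (fun i : ℕ => x (n - (i : ℤ))) (i + 1)) := by
            exact Finset.sum_congr rfl fun i _ => by rw [hy i]
      _ = _ := by rw [hq]
  rw [e1, e2]
  simp only
  have hn1 : n + 1 - 1 = n := by ring
  rw [hn1, hx n hn]
  ring
end

section
/- Let k ≥ 2, let a_0,…,a_k, b_0,…,b_k ∈ ℂ and g_n : ℂ → ℂ for n ≥ 0. Suppose ρ, γ ∈ ℂ are nonzero with P(ρ) = Q(ρ) = 0 and P(γ) = Q(γ) = 0, where in the case γ = ρ we additionally assume P′(ρ) = Q′(ρ) = 0. If (r_n)_{n ≥ −k+2} is any solution of the second factor equation (FE1), and sequences (t_n)_{n ≥ −k+1} and (x_n)_{n ≥ −k} are defined from arbitrary values t_{−k+1}, x_{−k} ∈ ℂ by t_n = γ t_{n−1} + r_n (n ≥ −k+2) and x_n = ρ x_{n−1} + t_n (n ≥ −k+1), then (x_n) is a solution of equation (★). -/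
open Finset Polynomial

/-- `p′_j = γ^(j+1) + p_0 γ^j + ⋯ + p_j`. -/
noncomputable def coefp' (a : ℕ → ℂ) (ρ γ : ℂ) (j : ℕ) : ℂ :=
  γ ^ (j + 1) + ∑ m ∈ range (j + 1), coefp a ρ m * γ ^ (j - m)

/-- `q′_j = q_0 γ^j + q_1 γ^(j-1) + ⋯ + q_j`. -/
noncomputable def coefq' (b : ℕ → ℂ) (ρ γ : ℂ) (j : ℕ) : ℂ :=
  ∑ m ∈ range (j + 1), coefq b ρ m * γ ^ (j - m)

/-- A sequence `r : ℤ → ℂ` is a solution of the second factor equation (FE1):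
`r_{n+1} = -∑_{j=0}^{k-2} p′_j r_{n-j} + g_n (∑_{j=0}^{k-2} q′_j r_{n-j})` for all `n ≥ 0`. -/
def IsSolutionFE1 (k : ℕ) (a b : ℕ → ℂ) (g : ℤ → ℂ → ℂ) (ρ γ : ℂ) (r : ℤ → ℂ) : Prop :=
  ∀ n : ℤ, 0 ≤ n →
    r (n + 1) = -(∑ j ∈ range (k - 1), coefp' a ρ γ j * r (n - j)) +
      g n (∑ j ∈ range (k - 1), coefq' b ρ γ j * r (n - j))

section recs
variable {F : Type*} [Field F] (a b : ℕ → F) (ρ : F)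

lemma coefp_zero : coefp a ρ 0 = ρ - a 0 := by simp [coefp]

lemma coefq_zero : coefq b ρ 0 = b 0 := by simp [coefq]

lemma shift_sum (c : ℕ → F) (i : ℕ) :
    ∑ m ∈ range (i + 1), c m * ρ ^ (i + 1 - m) = ρ * ∑ m ∈ range (i + 1), c m * ρ ^ (i - m) := by
  rw [Finset.mul_sum]
  refine Finset.sum_congr rfl fun m hm => ?_
  rw [mem_range] at hm
  rw [show i + 1 - m = (i - m) + 1 by omega, pow_succ]
  ring

lemma coefp_eval (k : ℕ) : coefp a ρ k = (polyP k a).eval ρ := by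
  simp [coefp, polyP, eval_finset_sum]

lemma coefq_eval (k : ℕ) : coefq b ρ k = (polyQ k b).eval ρ := by
  simp [coefq, polyQ, eval_finset_sum]

end recs

section recs2
variable (a b : ℕ → ℂ) (ρ γ : ℂ)

lemma coefp'_zero : coefp' a ρ γ 0 = γ + coefp a ρ 0 := by simp [coefp']

lemma coefq'_zero : coefq' b ρ γ 0 = coefq b ρ 0 := by simp [coefq']

lemma coefp'_succ (j : ℕ) : coefp' a ρ γ (j + 1) = γ * coefp' a ρ γ j + coefp a ρ (j + 1) := by
  unfold coefp'
  rw [Finset.sum_range_succ, shift_sum, Nat.sub_self, pow_zero, pow_succ]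
  ring

lemma coefq'_succ (j : ℕ) : coefq' b ρ γ (j + 1) = γ * coefq' b ρ γ j + coefq b ρ (j + 1) := by
  unfold coefq'
  rw [Finset.sum_range_succ, shift_sum, Nat.sub_self, pow_zero, mul_one]
end recs2

section factor
variable (a b : ℕ → ℂ) (ρ γ : ℂ)

lemma coefp'_mul (j : ℕ) :
    (γ - ρ) * coefp' a ρ γ j = coefp a γ (j + 1) - coefp a ρ (j + 1) := by
  induction j with
  | zero =>
      rw [coefp'_zero, coefp_zero, coefp_succ, coefp_succ, coefp_zero, coefp_zero]
      ring
  | succ j ih =>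
      rw [coefp'_succ, coefp_succ a γ (j + 1), coefp_succ a ρ (j + 1)]
      linear_combination γ * ih

lemma coefq'_mul (j : ℕ) :
    (γ - ρ) * coefq' b ρ γ j = coefq b γ (j + 1) - coefq b ρ (j + 1) := by
  induction j with
  | zero =>
      rw [coefq'_zero, coefq_zero, coefq_succ, coefq_succ, coefq_zero, coefq_zero]
      ring
  | succ j ih =>
      rw [coefq'_succ, coefq_succ b γ (j + 1), coefq_succ b ρ (j + 1)]
      linear_combination γ * ih

lemma coefp'_diag (j : ℕ) :
    coefp' a ρ ρ j = ((j : ℂ) + 2) * ρ ^ (j + 1)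
      - ∑ m ∈ range (j + 1), ((j + 1 - m : ℕ) : ℂ) * a m * ρ ^ (j - m) := by
  induction j with
  | zero => simp [coefp'_zero, coefp_zero]; ring
  | succ j ih =>
      rw [coefp'_succ, ih]
      rw [show coefp a ρ (j + 1) = ρ ^ (j + 2) - ∑ m ∈ range (j + 2), a m * ρ ^ (j + 1 - m)
        from rfl]
      rw [Finset.sum_range_succ (fun m => ((j + 1 + 1 - m : ℕ) : ℂ) * a m * ρ ^ (j + 1 - m)),
        Finset.sum_range_succ (fun m => a m * ρ ^ (j + 1 - m))]
      have h1 : ∑ m ∈ range (j + 1), ((j + 1 + 1 - m : ℕ) : ℂ) * a m * ρ ^ (j + 1 - m)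
          = ∑ m ∈ range (j + 1),
            ((((j + 1 - m : ℕ) : ℂ) * a m * ρ ^ (j - m)) * ρ + a m * ρ ^ (j + 1 - m)) := by
        refine Finset.sum_congr rfl fun m hm => ?_
        rw [mem_range] at hm
        rw [show j + 1 + 1 - m = (j + 1 - m) + 1 by omega,
          show j + 1 - m = (j - m) + 1 by omega]
        push_cast
        ring
      rw [h1, Finset.sum_add_distrib, ← Finset.sum_mul]
      simp only [show j + 1 + 1 - (j + 1) = 1 by omega, Nat.sub_self, pow_zero,
        Nat.cast_one, one_mul]
      push_cast
      ring

lemma coefq'_diag (j : ℕ) :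
    coefq' b ρ ρ j = ∑ m ∈ range (j + 1), ((j + 1 - m : ℕ) : ℂ) * b m * ρ ^ (j - m) := by
  induction j with
  | zero => simp [coefq'_zero, coefq_zero]
  | succ j ih =>
      rw [coefq'_succ, ih]
      rw [show coefq b ρ (j + 1) = ∑ m ∈ range (j + 2), b m * ρ ^ (j + 1 - m) from rfl]
      rw [Finset.sum_range_succ (fun m => ((j + 1 + 1 - m : ℕ) : ℂ) * b m * ρ ^ (j + 1 - m)),
        Finset.sum_range_succ (fun m => b m * ρ ^ (j + 1 - m))]
      have h1 : ∑ m ∈ range (j + 1), ((j + 1 + 1 - m : ℕ) : ℂ) * b m * ρ ^ (j + 1 - m)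
          = ∑ m ∈ range (j + 1),
            ((((j + 1 - m : ℕ) : ℂ) * b m * ρ ^ (j - m)) * ρ + b m * ρ ^ (j + 1 - m)) := by
        refine Finset.sum_congr rfl fun m hm => ?_
        rw [mem_range] at hm
        rw [show j + 1 + 1 - m = (j + 1 - m) + 1 by omega,
          show j + 1 - m = (j - m) + 1 by omega]
        push_cast
        ring
      rw [h1, Finset.sum_add_distrib, ← Finset.sum_mul]
      simp only [show j + 1 + 1 - (j + 1) = 1 by omega, Nat.sub_self, pow_zero,
        Nat.cast_one, one_mul]
      push_cast
      ring
end factor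

section deriv
variable (a b : ℕ → ℂ) (ρ : ℂ)

lemma derivP_eval (k : ℕ) : (derivative (polyP k a)).eval ρ
    = ((k:ℂ)+1) * ρ ^ k - ∑ i ∈ range (k+1), a i * (((k - i : ℕ)):ℂ) * ρ ^ (k - i - 1) := by
  simp [polyP, derivative_X_pow, eval_finset_sum]
  refine Finset.sum_congr rfl fun i hi => ?_
  ring

lemma derivQ_eval (k : ℕ) : (derivative (polyQ k b)).eval ρ
    = ∑ i ∈ range (k+1), b i * (((k - i : ℕ)):ℂ) * ρ ^ (k - i - 1) := by
  simp [polyQ, derivative_X_pow, eval_finset_sum]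
  refine Finset.sum_congr rfl fun i hi => ?_
  ring

lemma coefp'_diag_eval (K : ℕ) :
    coefp' a ρ ρ K = (derivative (polyP (K+1) a)).eval ρ := by
  rw [coefp'_diag, derivP_eval,
    Finset.sum_range_succ (fun i => a i * (((K + 1 - i : ℕ)):ℂ) * ρ ^ (K + 1 - i - 1)) (K+1)]
  simp only [Nat.sub_self, Nat.cast_zero, mul_zero, zero_mul, add_zero]
  rw [show (((K + 1 : ℕ):ℂ) + 1) = (K:ℂ) + 2 by push_cast; ring, sub_right_inj]
  refine Finset.sum_congr rfl fun i hi => ?_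
  rw [mem_range] at hi
  rw [show K + 1 - i - 1 = K - i by omega]
  ring

lemma coefq'_diag_eval (K : ℕ) :
    coefq' b ρ ρ K = (derivative (polyQ (K+1) b)).eval ρ := by
  rw [coefq'_diag, derivQ_eval,
    Finset.sum_range_succ (fun i => b i * (((K + 1 - i : ℕ)):ℂ) * ρ ^ (K + 1 - i - 1)) (K+1)]
  simp only [Nat.sub_self, Nat.cast_zero, mul_zero, zero_mul, add_zero]
  refine Finset.sum_congr rfl fun i hi => ?_
  rw [mem_range] at hi
  rw [show K + 1 - i - 1 = K - i by omega]
  ring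

end deriv

lemma tele2 (lam : ℂ) (y z : ℤ → ℂ) (N : ℤ)
    (hy : ∀ n : ℤ, N ≤ n → y n = lam * y (n - 1) + z n)
    (m : ℕ) (d : ℕ → ℂ) (n : ℤ) (hn : N + (m : ℤ) ≤ n) :
    ∑ j ∈ range (m + 1), d j * z (n - j)
      = d 0 * y n + (∑ i ∈ range m, (d (i + 1) - lam * d i) * y (n - i - 1))
        - lam * d m * y (n - m - 1) := by
  have hz : ∀ j ∈ range (m + 1), d j * z (n - j)
      = d j * y (n - j) - lam * (d j * y (n - j - 1)) := by
    intro j hj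
    rw [mem_range] at hj
    have hj' : (j : ℤ) ≤ m := by exact_mod_cast Nat.lt_succ_iff.mp hj
    have := hy (n - j) (by omega)
    rw [this]; ring
  rw [Finset.sum_congr rfl hz, Finset.sum_sub_distrib,
    Finset.sum_range_succ' (fun j => d j * y (n - j)) m,
    ← Finset.mul_sum,
    Finset.sum_range_succ (fun j => d j * y (n - j - 1)) m]
  simp only [Nat.cast_zero, sub_zero]
  have e1 : ∀ i ∈ range m, d (i + 1) * y (n - ((i + 1 : ℕ) : ℤ)) = d (i + 1) * y (n - i - 1) := by
    intro i _
    congr 2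
    push_cast
    ring
  rw [Finset.sum_congr rfl e1]
  have e2 : ∑ i ∈ range m, (d (i + 1) - lam * d i) * y (n - i - 1)
      = (∑ i ∈ range m, d (i + 1) * y (n - i - 1))
        - lam * ∑ i ∈ range m, d i * y (n - i - 1) := by
    rw [Finset.mul_sum, ← Finset.sum_sub_distrib]
    exact Finset.sum_congr rfl fun i _ => by ring
  rw [e2]
  ring

/-- conversely, if `ρ, γ ≠ 0` are common roots of `P` and `Q` (with `ρ` a
double root of both when `γ = ρ`), `r` solves (FE1), and `t`, `x` are generated from
arbitrary values `t_{-k+1}`, `x_{-k}` by `t_n = γ t_{n-1} + r_n` (`n ≥ -k+2`) and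
`x_n = ρ x_{n-1} + t_n` (`n ≥ -k+1`), then `x` solves (★). -/
theorem statement5 (k : ℕ) (hk : 2 ≤ k) (a b : ℕ → ℂ) (g : ℤ → ℂ → ℂ)
    (ρ γ : ℂ) (hρ : ρ ≠ 0) (hγ : γ ≠ 0)
    (hPρ : (polyP k a).eval ρ = 0) (hQρ : (polyQ k b).eval ρ = 0)
    (hPγ : (polyP k a).eval γ = 0) (hQγ : (polyQ k b).eval γ = 0)
    (hdbl : γ = ρ →
      (derivative (polyP k a)).eval ρ = 0 ∧ (derivative (polyQ k b)).eval ρ = 0)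
    (r : ℤ → ℂ) (hr : IsSolutionFE1 k a b g ρ γ r)
    (t : ℤ → ℂ) (ht : ∀ n : ℤ, -(k : ℤ) + 2 ≤ n → t n = γ * t (n - 1) + r n)
    (x : ℤ → ℂ) (hx : ∀ n : ℤ, -(k : ℤ) + 1 ≤ n → x n = ρ * x (n - 1) + t n) :
    IsSolutionStar k a b g x := by
  obtain ⟨K, rfl⟩ : ∃ K, k = K + 2 := ⟨k - 2, by omega⟩
  have hpk : coefp a ρ (K + 2) = 0 := by rw [coefp_eval]; exact hPρ
  have hqk : coefq b ρ (K + 2) = 0 := by rw [coefq_eval]; exact hQρ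
  have hp' : coefp' a ρ γ (K + 1) = 0 := by
    by_cases hgr : γ = ρ
    · subst hgr
      rw [coefp'_diag_eval]
      exact (hdbl rfl).1
    · have h := coefp'_mul a ρ γ (K + 1)
      rw [coefp_eval, coefp_eval, hPγ, hPρ, sub_zero] at h
      rcases mul_eq_zero.mp h with h0 | h0
      · exact absurd (sub_eq_zero.mp h0) hgr
      · exact h0
  have hq' : coefq' b ρ γ (K + 1) = 0 := by
    by_cases hgr : γ = ρ
    · subst hgr
      rw [coefq'_diag_eval]
      exact (hdbl rfl).2
    · have h := coefq'_mul b ρ γ (K + 1)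
      rw [coefq_eval, coefq_eval, hQγ, hQρ, sub_zero] at h
      rcases mul_eq_zero.mp h with h0 | h0
      · exact absurd (sub_eq_zero.mp h0) hgr
      · exact h0
  have hpK1 : ρ * coefp a ρ (K + 1) = a (K + 2) := by
    have h := coefp_succ a ρ (K + 1)
    rw [hpk] at h
    linear_combination -h
  have hqK1 : ρ * coefq b ρ (K + 1) = -(b (K + 2)) := by
    have h := coefq_succ b ρ (K + 1)
    rw [hqk] at h
    linear_combination -h
  have hgpK : γ * coefp' a ρ γ K = -(coefp a ρ (K + 1)) := by
    have h := coefp'_succ a ρ γ K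
    rw [hp'] at h
    linear_combination -h
  have hgqK : γ * coefq' b ρ γ K = -(coefq b ρ (K + 1)) := by
    have h := coefq'_succ b ρ γ K
    rw [hq'] at h
    linear_combination -h
  -- Step A : t solves (FE)
  have htFE : ∀ n : ℤ, 0 ≤ n →
      t (n + 1) = -(∑ i ∈ range (K + 2), coefp a ρ i * t (n - i)) +
        g n (∑ i ∈ range (K + 2), coefq b ρ i * t (n - i)) := by
    intro n hn
    have h1 : t (n + 1) = γ * t n + r (n + 1) := by
      have h := ht (n + 1) (by push_cast; omega)
      simpa using h
    have hr' := hr n hn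
    simp only [show K + 2 - 1 = K + 1 by omega] at hr'
    have hteleP := tele2 γ t r (-(K + 2 : ℕ) + 2 : ℤ) ht K (coefp' a ρ γ) n
      (by push_cast; omega)
    have hteleQ := tele2 γ t r (-(K + 2 : ℕ) + 2 : ℤ) ht K (coefq' b ρ γ) n
      (by push_cast; omega)
    have hmidP : ∑ i ∈ range K, (coefp' a ρ γ (i + 1) - γ * coefp' a ρ γ i) * t (n - i - 1)
        = ∑ i ∈ range K, coefp a ρ (i + 1) * t (n - i - 1) :=
      Finset.sum_congr rfl fun i _ => by rw [coefp'_succ]; ring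
    have hmidQ : ∑ i ∈ range K, (coefq' b ρ γ (i + 1) - γ * coefq' b ρ γ i) * t (n - i - 1)
        = ∑ i ∈ range K, coefq b ρ (i + 1) * t (n - i - 1) :=
      Finset.sum_congr rfl fun i _ => by rw [coefq'_succ]; ring
    have hsplitP : ∑ i ∈ range (K + 2), coefp a ρ i * t (n - i)
        = (∑ i ∈ range K, coefp a ρ (i + 1) * t (n - i - 1))
          + coefp a ρ (K + 1) * t (n - K - 1) + coefp a ρ 0 * t n := by
      rw [Finset.sum_range_succ' (fun i => coefp a ρ i * t (n - i)) (K + 1),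
        Finset.sum_range_succ (fun i => coefp a ρ (i + 1) * t (n - ((i + 1 : ℕ) : ℤ)))]
      simp only [Nat.cast_zero, sub_zero]
      rw [show n - ((K + 1 : ℕ) : ℤ) = n - K - 1 by push_cast; ring]
      congr 2
      refine Finset.sum_congr rfl fun i _ => ?_
      rw [show n - ((i + 1 : ℕ) : ℤ) = n - i - 1 by push_cast; ring]
    have hsplitQ : ∑ i ∈ range (K + 2), coefq b ρ i * t (n - i)
        = (∑ i ∈ range K, coefq b ρ (i + 1) * t (n - i - 1))
          + coefq b ρ (K + 1) * t (n - K - 1) + coefq b ρ 0 * t n := by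
      rw [Finset.sum_range_succ' (fun i => coefq b ρ i * t (n - i)) (K + 1),
        Finset.sum_range_succ (fun i => coefq b ρ (i + 1) * t (n - ((i + 1 : ℕ) : ℤ)))]
      simp only [Nat.cast_zero, sub_zero]
      rw [show n - ((K + 1 : ℕ) : ℤ) = n - K - 1 by push_cast; ring]
      congr 2
      refine Finset.sum_congr rfl fun i _ => ?_
      rw [show n - ((i + 1 : ℕ) : ℤ) = n - i - 1 by push_cast; ring]
    have hQ : ∑ j ∈ range (K + 1), coefq' b ρ γ j * r (n - j)
        = ∑ i ∈ range (K + 2), coefq b ρ i * t (n - i) := by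
      rw [hteleQ, hmidQ, hsplitQ, coefq'_zero]
      linear_combination (-(t (n - K - 1))) * hgqK
    have hP : γ * t n - ∑ j ∈ range (K + 1), coefp' a ρ γ j * r (n - j)
        = -(∑ i ∈ range (K + 2), coefp a ρ i * t (n - i)) := by
      rw [hteleP, hmidP, hsplitP, coefp'_zero]
      linear_combination (t (n - K - 1)) * hgpK
    rw [h1, hr', hQ]
    linear_combination hP
  -- Step B : x solves (★)
  intro n hn
  have h2 : x (n + 1) = ρ * x n + t (n + 1) := by
    have h := hx (n + 1) (by push_cast; omega)
    simpa using h
  have hteleP := tele2 ρ x t (-(K + 2 : ℕ) + 1 : ℤ) hx (K + 1) (coefp a ρ) n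
    (by push_cast; omega)
  have hteleQ := tele2 ρ x t (-(K + 2 : ℕ) + 1 : ℤ) hx (K + 1) (coefq b ρ) n
    (by push_cast; omega)
  have hmidP : ∑ i ∈ range (K + 1), (coefp a ρ (i + 1) - ρ * coefp a ρ i) * x (n - i - 1)
      = -(∑ i ∈ range (K + 1), a (i + 1) * x (n - i - 1)) := by
    rw [← Finset.sum_neg_distrib]
    exact Finset.sum_congr rfl fun i _ => by rw [coefp_succ]; ring
  have hmidQ : ∑ i ∈ range (K + 1), (coefq b ρ (i + 1) - ρ * coefq b ρ i) * x (n - i - 1)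
      = ∑ i ∈ range (K + 1), b (i + 1) * x (n - i - 1) :=
    Finset.sum_congr rfl fun i _ => by rw [coefq_succ]; ring
  have hsplitA : ∑ i ∈ range (K + 2 + 1), a i * x (n - i)
      = (∑ i ∈ range (K + 1), a (i + 1) * x (n - i - 1))
        + a (K + 2) * x (n - (K + 1) - 1) + a 0 * x n := by
    rw [Finset.sum_range_succ' (fun i => a i * x (n - i)) (K + 2),
      Finset.sum_range_succ (fun i => a (i + 1) * x (n - ((i + 1 : ℕ) : ℤ)))]
    simp only [Nat.cast_zero, sub_zero]
    rw [show n - ((K + 1 + 1 : ℕ) : ℤ) = n - (K + 1) - 1 by push_cast; ring]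
    congr 2
    refine Finset.sum_congr rfl fun i _ => ?_
    rw [show n - ((i + 1 : ℕ) : ℤ) = n - i - 1 by push_cast; ring]
  have hsplitB : ∑ i ∈ range (K + 2 + 1), b i * x (n - i)
      = (∑ i ∈ range (K + 1), b (i + 1) * x (n - i - 1))
        + b (K + 2) * x (n - (K + 1) - 1) + b 0 * x n := by
    rw [Finset.sum_range_succ' (fun i => b i * x (n - i)) (K + 2),
      Finset.sum_range_succ (fun i => b (i + 1) * x (n - ((i + 1 : ℕ) : ℤ)))]
    simp only [Nat.cast_zero, sub_zero]
    rw [show n - ((K + 1 + 1 : ℕ) : ℤ) = n - (K + 1) - 1 by push_cast; ring]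
    congr 2
    refine Finset.sum_congr rfl fun i _ => ?_
    rw [show n - ((i + 1 : ℕ) : ℤ) = n - i - 1 by push_cast; ring]
  have hQ2 : ∑ i ∈ range (K + 2), coefq b ρ i * t (n - i)
      = ∑ i ∈ range (K + 2 + 1), b i * x (n - i) := by
    rw [hteleQ, hmidQ, hsplitB, coefq_zero]
    rw [show ((K + 1 : ℕ) : ℤ) = (K : ℤ) + 1 by push_cast; ring]
    linear_combination (-(x (n - ((K : ℤ) + 1) - 1))) * hqK1
  have hP2 : ρ * x n - ∑ i ∈ range (K + 2), coefp a ρ i * t (n - i)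
      = ∑ i ∈ range (K + 2 + 1), a i * x (n - i) := by
    rw [hteleP, hmidP, hsplitA, coefp_zero]
    rw [show ((K + 1 : ℕ) : ℤ) = (K : ℤ) + 1 by push_cast; ring]
    linear_combination (x (n - ((K : ℤ) + 1) - 1)) * hpK1
  rw [h2, htFE n hn, hQ2]
  linear_combination hP2
end

section
/- Let k ≥ 2, let a_0,…,a_k, b_0,…,b_k ∈ ℝ, and let ρ = μ(cos θ + i sin θ) ∈ ℂ with μ > 0 and sin θ ≠ 0 be a common root of the (complexified) polynomials P and Q. With γ = ρ̄ (the complex conjugate of ρ), define p_i = ρ^{i+1} − a_0 ρ^{i} − ⋯ − a_i, q_i = b_0 ρ^{i} + ⋯ + b_i for 0 ≤ i ≤ k−1, and p′_j = γ^{j+1} + p_0 γ^{j} + ⋯ + p_j, q′_j = q_0 γ^{j} + ⋯ + q_j for 0 ≤ j ≤ k−2. Then each p′_j and each q′_j is a real number, and for j = 0,1,…,k−2: p′_j = μ^{j+1}·sin((j+2)θ)/sin θ − (1/sin θ)·Σ_{m=0}^{j} a_m μ^{j−m} sin((j−m+1)θ), and q′_j = (1/sin θ)·Σ_{m=0}^{j}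 b_m μ^{j−m} sin((j−m+1)θ). -/
open Finset Polynomial

/-- `ρ = μ (cos θ + i sin θ)`. -/
noncomputable def rho (μ θ : ℝ) : ℂ :=
  (μ : ℂ) * ((Real.cos θ : ℂ) + (Real.sin θ : ℂ) * Complex.I)

/-- The real formula
`p′_j = μ^(j+1) sin((j+2)θ)/sin θ - (1/sin θ) ∑_{m=0}^{j} a_m μ^(j-m) sin((j-m+1)θ)`. -/
noncomputable def realP' (a : ℕ → ℝ) (μ θ : ℝ) (j : ℕ) : ℝ :=
  μ ^ (j + 1) * Real.sin (((j + 2 : ℕ) : ℝ) * θ) / Real.sin θ -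
    (1 / Real.sin θ) *
      ∑ m ∈ range (j + 1), a m * μ ^ (j - m) * Real.sin (((j - m + 1 : ℕ) : ℝ) * θ)

/-- The real formula `q′_j = (1/sin θ) ∑_{m=0}^{j} b_m μ^(j-m) sin((j-m+1)θ)`. -/
noncomputable def realQ' (b : ℕ → ℝ) (μ θ : ℝ) (j : ℕ) : ℝ :=
  (1 / Real.sin θ) *
    ∑ m ∈ range (j + 1), b m * μ ^ (j - m) * Real.sin (((j - m + 1 : ℕ) : ℝ) * θ)


section Aux

open Complex in
lemma aux_rho0 (μ θ : ℝ) : rho μ θ = (μ : ℂ) * Complex.exp ((θ : ℂ) * Complex.I) := by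
  rw [rho, Complex.exp_mul_I]; push_cast; rfl

lemma aux_rho_pow (μ θ : ℝ) (n : ℕ) : (rho μ θ) ^ n = rho (μ^n) (n*θ) := by
  rw [aux_rho0, mul_pow, ← Complex.exp_nat_mul, aux_rho0 (μ^n) (n*θ)]
  push_cast; ring_nf

lemma aux_conj_rho (μ θ : ℝ) : (starRingEnd ℂ) (rho μ θ) = rho μ (-θ) := by
  simp only [rho, map_mul, map_add, Complex.conj_ofReal, Complex.conj_I, Real.cos_neg,
    Real.sin_neg]
  push_cast
  ring

lemma aux_im (a φ : ℝ) : (rho a φ).im = a * Real.sin φ := by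
  simp only [rho, Complex.add_im, Complex.mul_im, Complex.mul_re, Complex.ofReal_re,
    Complex.ofReal_im, Complex.I_re, Complex.I_im, Complex.add_re]
  ring

lemma aux_diff (μ θ : ℝ) :
    rho μ θ - (starRingEnd ℂ) (rho μ θ) = 2 * ((μ * Real.sin θ : ℝ) : ℂ) * Complex.I := by
  rw [aux_conj_rho]
  simp only [rho, Real.cos_neg, Real.sin_neg]
  push_cast
  ring

/-- key geometric sum -/
lemma aux_geomS (μ θ : ℝ) (hμ : μ ≠ 0) (hθ : Real.sin θ ≠ 0) (n : ℕ) :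
    ∑ t ∈ range (n+1), (rho μ θ)^t * ((starRingEnd ℂ) (rho μ θ))^(n-t)
      = ((μ^n * Real.sin (((n+1 : ℕ) : ℝ) * θ) / Real.sin θ : ℝ) : ℂ) := by
  have hdiff := aux_diff μ θ
  have hne : rho μ θ - (starRingEnd ℂ) (rho μ θ) ≠ 0 := by
    rw [hdiff]
    refine mul_ne_zero (mul_ne_zero two_ne_zero ?_) Complex.I_ne_zero
    exact_mod_cast mul_ne_zero hμ hθ
  apply mul_right_cancel₀ hne
  have hg := geom_sum₂_mul (rho μ θ) ((starRingEnd ℂ) (rho μ θ)) (n+1)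
  simp only [Nat.add_sub_cancel] at hg
  rw [hg, ← map_pow, Complex.sub_conj, aux_rho_pow, aux_im, hdiff]
  have key : (μ ^ n * Real.sin (((n+1 : ℕ) : ℝ) * θ) / Real.sin θ) * (μ * Real.sin θ)
      = μ ^ (n+1) * Real.sin (((n+1 : ℕ) : ℝ) * θ) := by
    field_simp
    ring
  have key2 : (2 : ℂ) * ((μ ^ (n+1) * Real.sin (((n+1 : ℕ) : ℝ) * θ) : ℝ) : ℂ) * Complex.I
      = ((μ ^ n * Real.sin (((n+1 : ℕ) : ℝ) * θ) / Real.sin θ : ℝ) : ℂ) *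
        (2 * ((μ * Real.sin θ : ℝ) : ℂ) * Complex.I) := by
    rw [← key]
    push_cast
    ring
  rw [← key2]
  norm_cast

/-- recurrence for the two-variable geometric sum -/
lemma aux_S_succ (ρ γ : ℂ) (n : ℕ) :
    ∑ t ∈ range (n+2), ρ^t * γ^(n+1-t)
      = γ * ∑ t ∈ range (n+1), ρ^t * γ^(n-t) + ρ^(n+1) := by
  rw [Finset.sum_range_succ, Finset.mul_sum]
  congr 1
  · apply Finset.sum_congr rfl
    intro t ht
    have h : n+1-t = (n-t)+1 := by have := Finset.mem_range.mp ht; omega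
    rw [h, pow_succ]; ring
  · simp

/-- convolution rearrangement -/
lemma aux_conv (c : ℕ → ℂ) (ρ γ : ℂ) (j : ℕ) :
    ∑ m ∈ range (j+1), coefq c ρ m * γ^(j-m)
      = ∑ i ∈ range (j+1), c i * ∑ t ∈ range (j-i+1), ρ^t * γ^(j-i-t) := by
  induction j with
  | zero => simp [coefq]
  | succ j ih =>
    have hL : ∑ m ∈ range (j+2), coefq c ρ m * γ^(j+1-m)
        = γ * ∑ m ∈ range (j+1), coefq c ρ m * γ^(j-m) + coefq c ρ (j+1) := by
      rw [Finset.sum_range_succ, Finset.mul_sum]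
      congr 1
      · apply Finset.sum_congr rfl
        intro m hm
        have h : j+1-m = (j-m)+1 := by have := Finset.mem_range.mp hm; omega
        rw [h, pow_succ]; ring
      · simp
    rw [hL, ih]
    rw [Finset.sum_range_succ (f := fun i => c i * ∑ t ∈ range (j+1-i+1), ρ^t * γ^(j+1-i-t))]
    have hR : ∑ i ∈ range (j+1), c i * ∑ t ∈ range (j+1-i+1), ρ^t * γ^(j+1-i-t)
        = ∑ i ∈ range (j+1),
            (γ * (c i * ∑ t ∈ range (j-i+1), ρ^t * γ^(j-i-t)) + c i * ρ^(j+1-i)) := by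
      apply Finset.sum_congr rfl
      intro i hi
      have h1 : j+1-i = (j-i)+1 := by have := Finset.mem_range.mp hi; omega
      rw [h1, aux_S_succ]
      ring
    rw [hR, Finset.sum_add_distrib, ← Finset.mul_sum]
    have hq : coefq c ρ (j+1) = (∑ i ∈ range (j+1), c i * ρ^(j+1-i)) + c (j+1) := by
      rw [coefq, Finset.sum_range_succ]
      simp
    rw [hq]
    simp
    ring

lemma aux_coefp'_eq (a : ℕ → ℂ) (ρ γ : ℂ) (j : ℕ) :
    coefp' a ρ γ j = (∑ t ∈ range (j+2), ρ^t * γ^(j+1-t))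
      - ∑ m ∈ range (j+1), coefq a ρ m * γ^(j-m) := by
  rw [coefp']
  have h1 : ∑ t ∈ range (j+2), ρ^t * γ^(j+1-t)
      = γ^(j+1) + ∑ m ∈ range (j+1), ρ^(m+1) * γ^(j-m) := by
    rw [Finset.sum_range_succ']
    simp [Nat.succ_sub_succ, add_comm]
  rw [h1]
  have h2 : ∀ m ∈ range (j+1), coefp a ρ m * γ^(j-m)
      = ρ^(m+1) * γ^(j-m) - coefq a ρ m * γ^(j-m) := by
    intro m _
    rw [coefp, coefq]
    ring
  rw [Finset.sum_congr rfl h2, Finset.sum_sub_distrib]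
  ring

end Aux

/-- if `ρ = μ e^{iθ}` (with `μ > 0`, `sin θ ≠ 0`) is a common root of the
complexified `P` and `Q`, then with `γ = ρ̄` the coefficients `p′_j, q′_j` are real and
given by the stated trigonometric formulas. -/
theorem statement10 (k : ℕ) (hk : 2 ≤ k) (a b : ℕ → ℝ) (μ θ : ℝ)
    (hμ : 0 < μ) (hθ : Real.sin θ ≠ 0)
    (hP : (polyP k (fun i => (a i : ℂ))).eval (rho μ θ) = 0)
    (hQ : (polyQ k (fun i => (b i : ℂ))).eval (rho μ θ) = 0) :
    ∀ j : ℕ, j ≤ k - 2 →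
      coefp' (fun i => (a i : ℂ)) (rho μ θ) ((starRingEnd ℂ) (rho μ θ)) j =
        ((realP' a μ θ j : ℝ) : ℂ) ∧
      coefq' (fun i => (b i : ℂ)) (rho μ θ) ((starRingEnd ℂ) (rho μ θ)) j =
        ((realQ' b μ θ j : ℝ) : ℂ) := by
  intro j hj
  have hμ' : μ ≠ 0 := hμ.ne'
  set ρ := rho μ θ with hρ
  set γ := (starRingEnd ℂ) (rho μ θ) with hγ
  have hterm : ∀ i ∈ range (j+1), ∀ c : ℝ,
      ((c : ℂ)) * ∑ t ∈ range (j-i+1), ρ^t * γ^(j-i-t)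
        = ((c * μ^(j-i) * Real.sin (((j-i+1 : ℕ) : ℝ) * θ) / Real.sin θ : ℝ) : ℂ) := by
    intro i _ c
    rw [hρ, hγ, aux_geomS μ θ hμ' hθ (j-i)]
    push_cast
    ring
  constructor
  · rw [aux_coefp'_eq, aux_conv]
    have hg : ∑ t ∈ range (j+2), ρ^t * γ^(j+1-t)
        = ((μ^(j+1) * Real.sin (((j+2 : ℕ) : ℝ) * θ) / Real.sin θ : ℝ) : ℂ) :=
      aux_geomS μ θ hμ' hθ (j+1)
    rw [hg, Finset.sum_congr rfl (fun i hi => hterm i hi (a i)), ← Complex.ofReal_sum,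
      ← Complex.ofReal_sub, Complex.ofReal_inj, realP', Finset.mul_sum]
    congr 1
    apply Finset.sum_congr rfl
    intro i _
    ring
  · rw [coefq', aux_conv, Finset.sum_congr rfl (fun i hi => hterm i hi (b i)),
      ← Complex.ofReal_sum, Complex.ofReal_inj, realQ', Finset.mul_sum]
    apply Finset.sum_congr rfl
    intro i _
    ring
end

section
/- Let k ≥ 2, let a_0,…,a_k, b_0,…,b_k ∈ ℝ, let g_n : ℝ → ℝ for n ≥ 0, and let ρ = μ(cos θ + i sin θ) with μ > 0 and sin θ ≠ 0 be a common root of the complexified polynomials P and Q. Let p′_j, q′_j (0 ≤ j ≤ k−2) be the real numbers p′_j = μ^{j+1} sin((j+2)θ)/sin θ − (1/sin θ)Σ_{m=0}^{j} a_m μ^{j−m} sin((j−m+1)θ) and q′_j = (1/sin θ)Σ_{m=0}^{j} b_m μ^{j−m} sin((j−m+1)θ). Then a real sequence (x_n)_{n ≥ −k} is a solution of equation (★) if and only if the real sequence r_n := x_n − 2μ cos θ · x_{n−1} + μ² x_{n−2} (defined for n ≥ −k+2) satisfies the real second factor equation (FE1): r_{n+1} = −Σ_{j=0}^{k−2} p′_j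 r_{n−j} + g_n(Σ_{j=0}^{k−2} q′_j r_{n−j}) for all n ≥ 0. -/
open Finset Polynomial

/-- A real sequence `x : ℤ → ℝ` is a solution of equation (★) with real data. -/
def IsSolutionStarR (k : ℕ) (a b : ℕ → ℝ) (g : ℤ → ℝ → ℝ) (x : ℤ → ℝ) : Prop :=
  ∀ n : ℤ, 0 ≤ n →
    x (n + 1) = (∑ i ∈ range (k + 1), a i * x (n - i)) +
      g n (∑ i ∈ range (k + 1), b i * x (n - i))

/-- A real sequence `r : ℤ → ℝ` is a solution of the real second factor equation (FE1):
`r_{n+1} = -∑_{j=0}^{k-2} p′_j r_{n-j} + g_n (∑_{j=0}^{k-2} q′_j r_{n-j})` for `n ≥ 0`,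
with the real coefficients `p′_j = realP' a μ θ j` and `q′_j = realQ' b μ θ j`. -/
def IsSolutionFE1R (k : ℕ) (a b : ℕ → ℝ) (g : ℤ → ℝ → ℝ) (μ θ : ℝ) (r : ℤ → ℝ) : Prop :=
  ∀ n : ℤ, 0 ≤ n →
    r (n + 1) = -(∑ j ∈ range (k - 1), realP' a μ θ j * r (n - j)) +
      g n (∑ j ∈ range (k - 1), realQ' b μ θ j * r (n - j))

/-!
Write `ρ = μω` with `ω = e^{iθ}`, and `s = 2μ cos θ = ρ + ρ̄`, `t = μ² = ρρ̄`. The real numbers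
`q′_j` are `Im (ω ∑_{m ≤ j} b_m ρ^{j-m}) / sin θ`, so they obey the recurrence
`q′_{j+2} = b_{j+2} + s q′_{j+1} - t q′_j` of the coefficients of `Q(u) / (u² - s u + t)`; since
`Q(ρ) = 0` and `μ ≠ 0`, also `q′_{k-1} = q′_k = 0`, i.e. the division is exact. Summation by parts
then rewrites `∑ b_i x_{n-i}` as `∑ q′_j r_{n-j}`. Finally `P` is the polynomial `Q` of the
coefficients `1, -a_0, …, -a_k`, whose `q′` sequence is `1, p′_0, p′_1, …`, so the same identity
rewrites `x_{n+1} - ∑ a_i x_{n-i}` as `r_{n+1} + ∑ p′_j r_{n-j}`, and (★) and (FE1) become the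
same equation.
-/

section SecondOrderDiff

variable {R : Type*} [CommRing R] (s t : R) (c q : ℕ → R) (y : ℤ → R)

theorem sum_mul_secondOrderDiff_eq (h0 : q 0 = c 0) (h1 : q 1 = c 1 + s * q 0)
    (hrec : ∀ j, q (j + 2) = c (j + 2) + s * q (j + 1) - t * q j) (n : ℤ) (N : ℕ) :
    ∑ j ∈ range N, q j * (y (n - j) - s * y (n - j - 1) + t * y (n - j - 2)) =
      ∑ i ∈ range N, c i * y (n - i) + (c N - q N) * y (n - N) +
        (c (N + 1) - q (N + 1) + s * q N) * y (n - N - 1) := by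
  induction N with
  | zero => simp [h0, h1]
  | succ N ih =>
    rw [sum_range_succ, ih, sum_range_succ, hrec,
      show n - ((N + 1 : ℕ) : ℤ) = n - N - 1 by push_cast; ring,
      show n - N - 1 - 1 = n - N - 2 by ring]
    ring

theorem sum_mul_eq_sum_mul_secondOrderDiff (h0 : q 0 = c 0) (h1 : q 1 = c 1 + s * q 0)
    (hrec : ∀ j, q (j + 2) = c (j + 2) + s * q (j + 1) - t * q j) (L : ℕ)
    (hL₁ : q (L + 1) = 0) (hL₂ : q (L + 2) = 0) (n : ℤ) :
    ∑ i ∈ range (L + 3), c i * y (n - i) =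
      ∑ j ∈ range (L + 1), q j * (y (n - j) - s * y (n - j - 1) + t * y (n - j - 2)) := by
  rw [sum_mul_secondOrderDiff_eq s t c q y h0 h1 hrec, hL₁, hL₂, sum_range_succ, sum_range_succ,
    show n - ((L + 1 + 1 : ℕ) : ℤ) = n - (L + 1 : ℕ) - 1 by push_cast; ring]
  ring

end SecondOrderDiff

theorem coefq_succ_s12 {F : Type*} [Field F] (c : ℕ → F) (z : F) (j : ℕ) :
    coefq c z (j + 1) = z * coefq c z j + c (j + 1) := by
  simp only [coefq, sum_range_succ _ (j + 1), Nat.sub_self, pow_zero, mul_one, mul_sum]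
  congr 1
  refine sum_congr rfl fun m hm => ?_
  rw [show j + 1 - m = j - m + 1 by have := mem_range.1 hm; omega, pow_succ]
  ring

theorem eval_polyQ {F : Type*} [Field F] (k : ℕ) (c : ℕ → F) (z : F) :
    (polyQ k c).eval z = coefq c z k := by
  simp [polyQ, coefq, eval_finsetSum]

section RootOnCircle

open Real

variable (μ θ : ℝ)

local notation "ω" => ((cos θ : ℂ) + (sin θ : ℂ) * Complex.I)

theorem rho_eq : rho μ θ = μ * ω := rfl

theorem omega_quadratic : ω ^ 2 - 2 * cos θ * ω + 1 = 0 := by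
  have h : (sin θ : ℂ) ^ 2 + (cos θ : ℂ) ^ 2 = 1 := by exact_mod_cast sin_sq_add_cos_sq θ
  linear_combination (sin θ : ℂ) ^ 2 * Complex.I_sq - h

theorem im_omega_mul_rho_pow (n : ℕ) :
    (ω * rho μ θ ^ n).im = μ ^ n * sin (((n + 1 : ℕ) : ℝ) * θ) := by
  have h : ω * rho μ θ ^ n = ((μ ^ n : ℝ) : ℂ) * ω ^ (n + 1) := by
    rw [rho_eq, mul_pow, Complex.ofReal_pow]; ring
  rw [h, Complex.im_ofReal_mul, Complex.ofReal_cos, Complex.ofReal_sin,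
    Complex.cos_add_sin_mul_I_pow, ← Complex.ofReal_natCast, ← Complex.ofReal_mul,
    ← Complex.ofReal_cos, ← Complex.ofReal_sin, Complex.add_im, Complex.ofReal_im,
    Complex.mul_I_im, Complex.ofReal_re, zero_add]

theorem im_omega_mul_ofReal (r : ℝ) : (ω * r).im = r * sin θ := by
  rw [mul_comm, Complex.im_ofReal_mul, Complex.add_im, Complex.ofReal_im, Complex.mul_I_im,
    Complex.ofReal_re, zero_add]

variable (c : ℕ → ℝ)

theorem realQ'_eq_im_div (j : ℕ) :
    realQ' c μ θ j = (ω * coefq (fun i => (c i : ℂ)) (rho μ θ) j).im / sin θ := by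
  rw [realQ', coefq, one_div_mul_eq_div, mul_sum, Complex.im_sum]
  congr 1
  refine sum_congr rfl fun m _ => ?_
  rw [mul_left_comm, Complex.im_ofReal_mul, im_omega_mul_rho_pow]
  ring

local notation "cC" => fun i => (c i : ℂ)

theorem omega_mul_coefq_one :
    ω * coefq cC (rho μ θ) 1 =
      ω * c 1 - μ * c 0 + ((2 * μ * cos θ : ℝ) : ℂ) * (ω * coefq cC (rho μ θ) 0) := by
  rw [coefq_succ_s12]
  simp only [coefq, zero_add, range_one, sum_singleton, Complex.ofReal_mul,
    Complex.ofReal_ofNat]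
  linear_combination ω * c 0 * rho_eq μ θ + μ * c 0 * omega_quadratic θ

theorem omega_mul_coefq_add_two (j : ℕ) :
    ω * coefq cC (rho μ θ) (j + 2) =
      ω * c (j + 2) - μ * c (j + 1) + ((2 * μ * cos θ : ℝ) : ℂ) * (ω * coefq cC (rho μ θ) (j + 1))
        - ((μ ^ 2 : ℝ) : ℂ) * (ω * coefq cC (rho μ θ) j) := by
  simp only [coefq_succ_s12 _ _ (j + 1), coefq_succ_s12 _ _ j, Complex.ofReal_mul,
    Complex.ofReal_ofNat, Complex.ofReal_pow]
  linear_combination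
    (ω * coefq cC (rho μ θ) j * (rho μ θ + μ * ω - 2 * μ * cos θ) + ω * c (j + 1)) * rho_eq μ θ +
      ((μ : ℂ) ^ 2 * ω * coefq cC (rho μ θ) j + μ * c (j + 1)) * omega_quadratic θ

variable {θ}

theorem realQ'_zero (hθ : sin θ ≠ 0) : realQ' c μ θ 0 = c 0 := by
  simp only [realQ', zero_add, range_one, sum_singleton, Nat.sub_self, pow_zero, mul_one,
    Nat.cast_one, one_mul]
  field_simp

theorem realQ'_one (hθ : sin θ ≠ 0) : realQ' c μ θ 1 = c 1 + 2 * μ * cos θ * realQ' c μ θ 0 := by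
  simp only [realQ'_eq_im_div, omega_mul_coefq_one, Complex.add_im, Complex.sub_im,
    im_omega_mul_ofReal, Complex.im_ofReal_mul, ← Complex.ofReal_mul, Complex.ofReal_im]
  field_simp
  ring

theorem realQ'_add_two (hθ : sin θ ≠ 0) (j : ℕ) :
    realQ' c μ θ (j + 2) =
      c (j + 2) + 2 * μ * cos θ * realQ' c μ θ (j + 1) - μ ^ 2 * realQ' c μ θ j := by
  simp only [realQ'_eq_im_div, omega_mul_coefq_add_two, Complex.add_im, Complex.sub_im,
    im_omega_mul_ofReal, Complex.im_ofReal_mul, ← Complex.ofReal_mul, Complex.ofReal_im]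
  field_simp
  ring

theorem realQ'_eq_zero_of_isRoot (hμ : μ ≠ 0) (L : ℕ)
    (hQ : (polyQ (L + 2) cC).eval (rho μ θ) = 0) :
    realQ' c μ θ (L + 1) = 0 ∧ realQ' c μ θ (L + 2) = 0 := by
  rw [eval_polyQ] at hQ
  have hdiv : (μ : ℂ) * (ω * coefq cC (rho μ θ) (L + 1)) = -c (L + 2) := by
    have h := coefq_succ_s12 cC (rho μ θ) (L + 1)
    rw [hQ] at h
    linear_combination -h - coefq cC (rho μ θ) (L + 1) * rho_eq μ θ
  have him := congrArg Complex.im hdiv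
  rw [Complex.im_ofReal_mul, Complex.neg_im, Complex.ofReal_im, neg_zero, mul_eq_zero] at him
  rw [realQ'_eq_im_div, realQ'_eq_im_div, him.resolve_left hμ, hQ]
  simp

theorem sum_mul_eq_sum_realQ'_mul (hμ : μ ≠ 0) (hθ : sin θ ≠ 0) {k : ℕ} (hk : 2 ≤ k)
    (hQ : (polyQ k cC).eval (rho μ θ) = 0) (y : ℤ → ℝ) (n : ℤ) :
    ∑ i ∈ range (k + 1), c i * y (n - i) =
      ∑ j ∈ range (k - 1), realQ' c μ θ j *
        (y (n - j) - 2 * μ * cos θ * y (n - j - 1) + μ ^ 2 * y (n - j - 2)) := by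
  obtain ⟨L, rfl⟩ : ∃ L, k = L + 2 := ⟨k - 2, by omega⟩
  obtain ⟨hL₁, hL₂⟩ := realQ'_eq_zero_of_isRoot μ c hμ L hQ
  exact sum_mul_eq_sum_mul_secondOrderDiff _ _ c _ y (realQ'_zero μ c hθ) (realQ'_one μ c hθ)
    (realQ'_add_two μ c hθ) L hL₁ hL₂ n

end RootOnCircle

def monicCoeffs {R : Type*} [Ring R] (a : ℕ → R) : ℕ → R
  | 0 => 1
  | i + 1 => -a i

theorem polyP_eq_polyQ_monicCoeffs {F : Type*} [Field F] (k : ℕ) (a : ℕ → F) :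
    polyP k a = polyQ (k + 1) (monicCoeffs a) := by
  simp only [polyP, polyQ, sum_range_succ', tsub_zero, sub_eq_add_neg, neg_add_rev, monicCoeffs,
    map_neg, Nat.reduceSubDiff, neg_mul, sum_neg_distrib, map_one, one_mul]
  ring

theorem ofReal_monicCoeffs (a : ℕ → ℝ) :
    (fun i => ((monicCoeffs a i : ℝ) : ℂ)) = monicCoeffs fun i => (a i : ℂ) := by
  ext (_ | i) <;> simp [monicCoeffs]

theorem realP'_eq_realQ'_monicCoeffs (a : ℕ → ℝ) (μ θ : ℝ) (j : ℕ) :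
    realP' a μ θ j = realQ' (monicCoeffs a) μ θ (j + 1) := by
  simp only [realP', realQ', sum_range_succ', monicCoeffs, Nat.cast_add, Nat.cast_ofNat,
    Nat.cast_one, one_div, tsub_zero, Nat.reduceSubDiff, neg_mul, sum_neg_distrib, neg_add_rev,
    one_mul]
  ring_nf

theorem sub_sum_mul_eq_add_sum_realP'_mul {μ θ : ℝ} (hμ : μ ≠ 0) (hθ : Real.sin θ ≠ 0) {k : ℕ}
    (hk : 2 ≤ k) (a : ℕ → ℝ) (hP : (polyP k (fun i => (a i : ℂ))).eval (rho μ θ) = 0)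
    (y : ℤ → ℝ) (n : ℤ) :
    y (n + 1) - ∑ i ∈ range (k + 1), a i * y (n - i) =
      (y (n + 1) - 2 * μ * Real.cos θ * y n + μ ^ 2 * y (n - 1)) +
        ∑ j ∈ range (k - 1), realP' a μ θ j *
          (y (n - j) - 2 * μ * Real.cos θ * y (n - j - 1) + μ ^ 2 * y (n - j - 2)) := by
  rw [polyP_eq_polyQ_monicCoeffs, ← ofReal_monicCoeffs] at hP
  have h := sum_mul_eq_sum_realQ'_mul μ (monicCoeffs a) hμ hθ (by omega) hP y (n + 1)
  rw [sum_range_succ' _ (k + 1), show k + 1 - 1 = k - 1 + 1 by omega,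
    sum_range_succ' _ (k - 1)] at h
  simp only [monicCoeffs, realQ'_zero μ _ hθ, ← realP'_eq_realQ'_monicCoeffs, Nat.cast_add,
    Nat.cast_one, Nat.cast_zero, add_sub_add_right_eq_sub, sub_zero, add_sub_cancel_right,
    show n + 1 - 2 = n - 1 by ring, one_mul, neg_mul, sum_neg_distrib] at h
  linear_combination h

/-- with `ρ = μ e^{iθ}` (`μ > 0`, `sin θ ≠ 0`) a common root of the
complexified `P` and `Q`, a real sequence `x` solves (★) if and only if
`r_n := x_n - 2μ cos θ x_{n-1} + μ² x_{n-2}` solves the real second factor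
equation (FE1). -/
theorem statement12 (k : ℕ) (hk : 2 ≤ k) (a b : ℕ → ℝ) (g : ℤ → ℝ → ℝ) (μ θ : ℝ)
    (hμ : 0 < μ) (hθ : Real.sin θ ≠ 0)
    (hP : (polyP k (fun i => (a i : ℂ))).eval (rho μ θ) = 0)
    (hQ : (polyQ k (fun i => (b i : ℂ))).eval (rho μ θ) = 0)
    (x : ℤ → ℝ) :
    IsSolutionStarR k a b g x ↔
      IsSolutionFE1R k a b g μ θ
        (fun n => x n - 2 * μ * Real.cos θ * x (n - 1) + μ ^ 2 * x (n - 2)) := by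
  refine forall₂_congr fun n _ => ?_
  have hmonic := sub_sum_mul_eq_add_sum_realP'_mul hμ.ne' hθ hk a hP x n
  beta_reduce
  rw [add_sub_cancel_right, show n + 1 - 2 = n - 1 by ring,
    sum_mul_eq_sum_realQ'_mul μ b hμ.ne' hθ hk hQ x n]
  constructor <;> intro h <;> linarith
end

section
/- Let p be a positive integer, let ρ ∈ ℂ with 0 < |ρ| < 1, and let (t_n)_{n ≥ 1} be a sequence in ℂ that converges to a p-cycle: there exist τ_0, …, τ_{p−1} ∈ ℂ such that t_n − τ_{(n−1) mod p} → 0 as n → ∞. Let (x_n)_{n ≥ 0} be defined by x_{n+1} = ρ x_n + t_{n+1} (x_0 ∈ ℂ arbitrary), and define ξ_i = (1/(1 − ρ^p))·Σ_{j=0}^{p−1} ρ^{p−j−1} τ_{(i+j) mod p} for i = 0, …, p−1. Then x_n − ξ_{n mod p} → 0 as n → ∞; that is, (x_n) converges to the p-cycle {ξ_0, …, ξ_{p−1}}. -/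
/-!
Telescoping the sum that defines `ξ` shows that `ξ` is `p`-periodic and obeys the same recurrence
as the forced system, `ξ_{i+1} = ρ ξ_i + τ_{i mod p}`. Hence `e_n = x_n - ξ_n` satisfies
`e_{n+1} = ρ e_n + (t_{n+1} - τ_{n mod p})`, a contraction driven by a null sequence, so `e_n → 0`.
-/

open Finset Filter Topology

theorem tendsto_zero_of_le_mul_add {r : ℝ} (hr0 : 0 ≤ r) (hr1 : r < 1) {a b : ℕ → ℝ}
    (ha : ∀ n, 0 ≤ a n) (hab : ∀ n, a (n + 1) ≤ r * a n + b n)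
    (hb : Tendsto b atTop (𝓝 0)) : Tendsto a atTop (𝓝 0) := by
  refine tendsto_order.2 ⟨fun ε hε => .of_forall fun n => hε.trans_le (ha n), fun ε hε => ?_⟩
  set c := ε / 2
  obtain ⟨N, hN⟩ := eventually_atTop.1
    (hb.eventually (gt_mem_nhds (show 0 < (1 - r) * c by have := sub_pos.2 hr1; positivity)))
  -- once `b ≤ (1 - r) c`, the excess of `a` over `c` decays geometrically
  have hgeom (k : ℕ) : a (k + N) - c ≤ r ^ k * (a N - c) := by
    simpa only [zero_add] using le_geom (u := fun k => a (k + N) - c) hr0 k fun j _ => by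
      have := hab (j + N)
      have := hN (j + N) (by omega)
      rw [add_right_comm]
      linarith
  have hlim : Tendsto (fun k => r ^ k * (a N - c) + c) atTop (𝓝 c) := by
    simpa using ((tendsto_pow_atTop_nhds_zero_of_lt_one hr0 hr1).mul_const _).add_const c
  have hshift : ∀ᶠ k in atTop, a (k + N) < ε :=
    (hlim.eventually (gt_mem_nhds (half_lt_self hε))).mono fun k hk => by linarith [hgeom k]
  rw [← map_add_atTop_eq_nat N]
  exact hshift

theorem tendsto_zero_of_eq_smul_add {𝕜 E : Type*} [NormedField 𝕜] [SeminormedAddCommGroup E]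
    [NormedSpace 𝕜 E] {c : 𝕜} (hc : ‖c‖ < 1) {e s : ℕ → E} (he : ∀ n, e (n + 1) = c • e n + s n)
    (hs : Tendsto s atTop (𝓝 0)) : Tendsto e atTop (𝓝 0) := by
  rw [tendsto_zero_iff_norm_tendsto_zero] at hs ⊢
  refine tendsto_zero_of_le_mul_add (norm_nonneg c) hc (fun n => norm_nonneg _) (fun n => ?_) hs
  rw [he, ← norm_smul]
  exact norm_add_le _ _

theorem sum_range_pow_mul_succ {R : Type*} [CommRing R] (ρ : R) (f : ℕ → R) (p : ℕ) :
    ∑ j ∈ range p, ρ ^ (p - j - 1) * f (j + 1) =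
      ρ * ∑ j ∈ range p, ρ ^ (p - j - 1) * f j + f p - ρ ^ p * f 0 := by
  have htelescope := sum_range_sub' (fun j => ρ ^ (p - j) * f j) p
  have hterm : ∀ j ∈ range p, ρ ^ (p - j) * f j - ρ ^ (p - (j + 1)) * f (j + 1) =
      ρ * (ρ ^ (p - j - 1) * f j) - ρ ^ (p - j - 1) * f (j + 1) := by
    intro j hj
    have := mem_range.1 hj
    rw [Nat.sub_add_eq]
    set m := p - j - 1
    rw [show p - j = m + 1 by omega, pow_succ]
    ring
  rw [sum_congr rfl hterm, sum_sub_distrib, ← mul_sum] at htelescope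
  simp only [Nat.sub_zero, Nat.sub_self, pow_zero, one_mul] at htelescope
  linear_combination -htelescope

theorem sum_range_pow_mul_mod_succ {R : Type*} [CommRing R] (ρ : R) (τ : ℕ → R) (p i : ℕ) :
    ∑ j ∈ range p, ρ ^ (p - j - 1) * τ ((i + 1 + j) % p) =
      ρ * ∑ j ∈ range p, ρ ^ (p - j - 1) * τ ((i + j) % p) + (1 - ρ ^ p) * τ (i % p) := by
  have := sum_range_pow_mul_succ ρ (fun j => τ ((i + j) % p)) p
  simp only [← add_assoc, Nat.add_mod_right, add_zero] at this
  simp only [add_right_comm i 1, this]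
  ring

theorem statement15_general (p : ℕ) (hp : 0 < p) (ρ : ℂ)
    (hρ1 : ‖ρ‖ < 1)
    (t : ℕ → ℂ) (τ : ℕ → ℂ)
    (hconv : Tendsto (fun n : ℕ => t n - τ ((n - 1) % p)) atTop (nhds 0))
    (x : ℕ → ℂ) (hx : ∀ n : ℕ, x (n + 1) = ρ * x n + t (n + 1))
    (ξ : ℕ → ℂ)
    (hξ : ∀ i : ℕ, ξ i = (1 / (1 - ρ ^ p)) * ∑ j ∈ range p, ρ ^ (p - j - 1) * τ ((i + j) % p)) :
    Tendsto (fun n : ℕ => x n - ξ (n % p)) atTop (nhds 0) := by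
  have hρp : 1 - ρ ^ p ≠ 0 := by
    have : ‖ρ ^ p‖ < 1 := by rw [norm_pow]; exact pow_lt_one₀ (norm_nonneg ρ) hρ1 hp.ne'
    exact sub_ne_zero.2 fun h => by simp [← h] at this
  have hξ_mod (n : ℕ) : ξ (n % p) = ξ n := by simp only [hξ, Nat.mod_add_mod]
  have hξ_succ (n : ℕ) : ξ (n + 1) = ρ * ξ n + τ (n % p) := by
    rw [hξ, hξ, sum_range_pow_mul_mod_succ]
    field_simp
  have hs : Tendsto (fun n => t (n + 1) - τ (n % p)) atTop (𝓝 0) := by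
    simpa [Function.comp_def] using hconv.comp (tendsto_add_atTop_nat 1)
  refine (tendsto_zero_of_eq_smul_add hρ1 (e := fun n => x n - ξ n) (fun n => ?_) hs).congr
    fun n => by rw [hξ_mod]
  rw [hx, hξ_succ, smul_eq_mul]
  ring

/-- let `0 < |ρ| < 1` and let `t` converge to the `p`-cycle
`τ_0,…,τ_{p-1}` in the sense that `t_n - τ_{(n-1) mod p} → 0`. If
`x_{n+1} = ρ x_n + t_{n+1}` and
`ξ_i = (1/(1-ρ^p)) ∑_{j=0}^{p-1} ρ^(p-j-1) τ_{(i+j) mod p}`, then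
`x_n - ξ_{n mod p} → 0`, i.e. `x` converges to the `p`-cycle `ξ_0,…,ξ_{p-1}`. -/
theorem statement15 (p : ℕ) (hp : 0 < p) (ρ : ℂ)
    (hρ0 : 0 < ‖ρ‖) (hρ1 : ‖ρ‖ < 1)
    (t : ℕ → ℂ) (τ : ℕ → ℂ)
    (hconv : Tendsto (fun n : ℕ => t n - τ ((n - 1) % p)) atTop (nhds 0))
    (x : ℕ → ℂ) (hx : ∀ n : ℕ, x (n + 1) = ρ * x n + t (n + 1))
    (ξ : ℕ → ℂ)
    (hξ : ∀ i : ℕ, ξ i = (1 / (1 - ρ ^ p)) * ∑ j ∈ range p, ρ ^ (p - j - 1) * τ ((i + j) % p)) :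
    Tendsto (fun n : ℕ => x n - ξ (n % p)) atTop (nhds 0) :=
  statement15_general p hp ρ hρ1 t τ hconv x hx ξ hξ
end

section
/- Let k ≥ 2, let a_0,…,a_k, b_0,…,b_k ∈ ℝ, let g_n : ℝ → ℝ for n ≥ 0, and suppose the complexified polynomials P and Q have a common non-real root ρ = μ(cos θ + i sin θ) with μ > 0 and sin θ ≠ 0. Let p be a positive integer with ρ^p ≠ 1. If the real second factor equation (FE1) has a solution (r_n) that is periodic with prime (minimal) period p, then equation (★) has a real solution (x_n) that is periodic with prime period p. -/
open Finset Polynomial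

/-!
Write `s = 2μ cos θ = ρ + ρ̄` and `t = μ² = ρ ρ̄`. Since `ρ` and `ρ̄` are common roots of `P`
and `Q`, the reflected polynomials of `P` and `Q` are divisible by
`1 - sX + tX² = (1 - ρX)(1 - ρ̄X)`, and the quotients have coefficients `1, p′_0, …, p′_{k-2}`
and `q′_0, …, q′_{k-2}`: convolutions of the coefficients with the Lucas sequence of `ρ, ρ̄`.
Hence if `r_n = x_n - s x_{n-1} + t x_{n-2}` and `r` solves (FE1), then `x` solves (★).

It remains to find such an `x`. After extending `r` periodically, the operator
`(1 - ρB)(1 - ρ̄B)` (`B` the backward shift) is invertible on `p`-periodic sequences because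
`ρ^p ≠ 1`: the inverse of `1 - γB` is `w ↦ (∑_{t<p} γ^t w_{n-t}) / (1 - γ^p)`. This gives a
real `p`-periodic `x`, and every period of `x` is a period of `r`, so `p` is also the prime
period of `x`.
-/

open Function

def quadShift (s t : ℝ) (x : ℤ → ℝ) (n : ℤ) : ℝ :=
  x n - s * x (n - 1) + t * x (n - 2)

theorem quadShift_add_eq_of_add_eq {s t : ℝ} {x : ℤ → ℝ} {n₀ : ℤ} {q : ℤ}
    (h : ∀ n, n₀ ≤ n → x (n + q) = x n) (n : ℤ) (hn : n₀ + 2 ≤ n) :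
    quadShift s t x (n + q) = quadShift s t x n := by
  unfold quadShift
  rw [h n (by omega), show n + q - 1 = n - 1 + q by ring, h (n - 1) (by omega),
    show n + q - 2 = n - 2 + q by ring, h (n - 2) (by omega)]

theorem sum_range_mul_eq_sum_range_mul_quadShift {s t : ℝ} {c d : ℕ → ℝ} (h0 : c 0 = d 0)
    (h1 : c 1 = d 1 - s * d 0) (h : ∀ i, c (i + 2) = d (i + 2) - s * d (i + 1) + t * d i)
    (x : ℤ → ℝ) (n : ℤ) (N : ℕ) :
    ∑ i ∈ range (N + 2), c i * x (n - i) =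
      ∑ j ∈ range N, d j * quadShift s t x (n - j) +
        d N * (x (n - N) - s * x (n - N - 1)) + d (N + 1) * x (n - N - 1) := by
  induction N with
  | zero =>
    simp only [zero_add, sum_range_succ, range_one, sum_singleton, h0, h1, range_zero, sum_empty,
      Nat.cast_zero, Nat.cast_one, sub_zero]
    ring
  | succ N ih =>
    rw [sum_range_succ, ih, sum_range_succ, h, quadShift]
    push_cast
    rw [show n - ((N : ℤ) + 2) = n - N - 2 by ring, show n - ((N : ℤ) + 1) = n - N - 1 by ring,
      show n - (N : ℤ) - 1 - 1 = n - N - 2 by ring]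
    ring

theorem exists_periodic_eq_of_eventually {α : Type*} {p : ℕ} (hp : 0 < p) {n₀ : ℤ} {r : ℤ → α}
    (h : ∀ n, n₀ ≤ n → r (n + p) = r n) :
    ∃ r' : ℤ → α, Periodic r' p ∧ ∀ n, n₀ ≤ n → r' n = r n := by
  have hp' : (0 : ℤ) < p := by exact_mod_cast hp
  have iterate (q : ℕ) (n : ℤ) (hn : n₀ ≤ n) : r (n + q * p) = r n := by
    induction q with
    | zero => simp
    | succ q ih =>
      have : (0 : ℤ) ≤ q * p := by positivity
      rw [show n + ((q + 1 : ℕ) : ℤ) * p = n + q * p + p by push_cast; ring, h _ (by omega), ih]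
  refine ⟨fun n => r (n₀ + (n - n₀) % p), fun n => ?_, fun n hn => ?_⟩
  · simp only [show n + p - n₀ = n - n₀ + p by ring, Int.add_emod_right]
  · obtain ⟨q, hq⟩ := Int.eq_ofNat_of_zero_le (Int.ediv_nonneg (sub_nonneg.2 hn) hp'.le)
    have hmod := Int.emod_add_mul_ediv (n - n₀) p
    show r (n₀ + (n - n₀) % p) = r n
    rw [← iterate q _ (by have := Int.emod_nonneg (n - n₀) hp'.ne'; omega)]
    rw [hq] at hmod
    congr 1
    linear_combination hmod

theorem exists_periodic_sub_mul_eq {K : Type*} [Field K] {p : ℕ} {γ : K} (hγ : γ ^ p ≠ 1)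
    {w : ℤ → K} (hw : Periodic w p) :
    ∃ y : ℤ → K, Periodic y p ∧ ∀ n, y n - γ * y (n - 1) = w n := by
  refine ⟨fun n => (∑ t ∈ range p, γ ^ t * w (n - t)) / (1 - γ ^ p), fun n => ?_, fun n => ?_⟩
  · refine congrArg (· / _) (sum_congr rfl fun t _ => ?_)
    rw [show n + p - t = n - t + p by ring, hw]
  · have telescope : ∑ t ∈ range p, γ ^ t * w (n - t) - γ * ∑ t ∈ range p, γ ^ t * w (n - 1 - t)
        = (1 - γ ^ p) * w n := by
      calc _ = ∑ t ∈ range p, (γ ^ t * w (n - t) - γ ^ (t + 1) * w (n - (t + 1 : ℕ))) := by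
            rw [mul_sum, ← sum_sub_distrib]
            refine sum_congr rfl fun t _ => ?_
            rw [show n - ((t + 1 : ℕ) : ℤ) = n - 1 - t by push_cast; ring, pow_succ]
            ring
        _ = (1 - γ ^ p) * w n := by
            rw [sum_range_sub']
            simp only [pow_zero, one_mul, Nat.cast_zero, sub_zero, hw.sub_eq]
            ring
    rw [← mul_div_assoc, div_sub_div_same, telescope,
      mul_div_cancel_left₀ _ (sub_ne_zero.2 hγ.symm)]

theorem exists_periodic_quadShift_eq {p : ℕ} {ρ : ℂ} (hρ : ρ ^ p ≠ 1) {r : ℤ → ℝ}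
    (hr : Periodic r p) :
    ∃ x : ℤ → ℝ, Periodic x p ∧ ∀ n, quadShift (2 * ρ.re) (Complex.normSq ρ) x n = r n := by
  obtain ⟨y, hy, hyr⟩ : ∃ y : ℤ → ℂ, Periodic y p ∧ ∀ n, y n - ρ * y (n - 1) = r n :=
    exists_periodic_sub_mul_eq hρ (hr.comp Complex.ofReal)
  have hρ' : (starRingEnd ℂ ρ) ^ p ≠ 1 := by rwa [← map_pow, map_ne_one_iff _ (RingHom.injective _)]
  obtain ⟨z, hz, hzy⟩ := exists_periodic_sub_mul_eq hρ' hy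
  refine ⟨fun n => (z n).re, hz.comp _, fun n => ?_⟩
  have hzr : z n - (↑(2 * ρ.re) : ℂ) * z (n - 1) + ↑(Complex.normSq ρ) * z (n - 2) = r n := by
    rw [← Complex.add_conj, ← Complex.mul_conj, show n - 2 = n - 1 - 1 by ring]
    linear_combination hzy n - ρ * hzy (n - 1) + hyr n
  simpa [quadShift] using congrArg Complex.re hzr

section Lucas

variable {ρ : ℂ}

/-- The Lucas sequence `Uₙ = (ρⁿ - ρ̄ⁿ) / (ρ - ρ̄)` of the pair `ρ, ρ̄`. -/
noncomputable def lucasU (ρ : ℂ) (n : ℕ) : ℝ :=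
  (ρ ^ n).im / ρ.im

theorem lucasU_add_two (ρ : ℂ) (n : ℕ) :
    lucasU ρ (n + 2) = 2 * ρ.re * lucasU ρ (n + 1) - Complex.normSq ρ * lucasU ρ n := by
  have hsq : ρ ^ 2 = ↑(2 * ρ.re) * ρ - ↑(Complex.normSq ρ) := by
    rw [← Complex.add_conj, ← Complex.mul_conj]; ring
  have him : (ρ ^ (n + 2)).im = 2 * ρ.re * (ρ ^ (n + 1)).im - Complex.normSq ρ * (ρ ^ n).im := by
    rw [pow_add, hsq, pow_succ]
    simp only [Complex.mul_im, Complex.sub_im, Complex.sub_re, Complex.mul_re,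
      Complex.ofReal_re, Complex.ofReal_im]
    ring
  simp only [lucasU, him]
  ring

theorem lucasU_one (hρ : ρ.im ≠ 0) : lucasU ρ 1 = 1 := by
  simp [lucasU, hρ]

theorem lucasU_two (hρ : ρ.im ≠ 0) : lucasU ρ 2 = 2 * ρ.re := by
  rw [lucasU_add_two, lucasU_one hρ]
  simp [lucasU]

/-- The coefficients of the power series `C(X) / ((1 - ρX)(1 - ρ̄X))`, where `C(X) = ∑ cₘ Xᵐ`. -/
noncomputable def quotCoeff (c : ℕ → ℝ) (ρ : ℂ) (j : ℕ) : ℝ :=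
  ∑ m ∈ range (j + 1), c m * lucasU ρ (j - m + 1)

variable {c : ℕ → ℝ}

theorem quotCoeff_zero (hρ : ρ.im ≠ 0) : quotCoeff c ρ 0 = c 0 := by
  simp [quotCoeff, lucasU_one hρ]

theorem quotCoeff_one (hρ : ρ.im ≠ 0) : quotCoeff c ρ 1 = c 1 + 2 * ρ.re * c 0 := by
  simp only [quotCoeff, Nat.reduceAdd, sum_range_succ, range_one, sum_singleton, tsub_zero,
    tsub_self, zero_add, lucasU_one hρ, lucasU_two hρ, mul_one]
  ring

theorem quotCoeff_add_two (hρ : ρ.im ≠ 0) (j : ℕ) :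
    quotCoeff c ρ (j + 2) =
      c (j + 2) + 2 * ρ.re * quotCoeff c ρ (j + 1) - Complex.normSq ρ * quotCoeff c ρ j := by
  have hsum : ∑ m ∈ range (j + 1), c m * lucasU ρ (j + 2 - m + 1) =
      2 * ρ.re * ∑ m ∈ range (j + 1), c m * lucasU ρ (j + 1 - m + 1) -
        Complex.normSq ρ * ∑ m ∈ range (j + 1), c m * lucasU ρ (j - m + 1) := by
    rw [mul_sum, mul_sum, ← sum_sub_distrib]
    refine sum_congr rfl fun m hm => ?_
    have hm : m ≤ j := Nat.lt_succ_iff.1 (mem_range.1 hm)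
    rw [show j + 2 - m + 1 = j - m + 1 + 2 by omega, show j + 1 - m + 1 = j - m + 1 + 1 by omega,
      lucasU_add_two]
    ring
  simp only [quotCoeff, sum_range_succ _ (j + 1), sum_range_succ _ (j + 2), hsum,
    show j + 2 - (j + 1) + 1 = 2 by omega, Nat.sub_self,
    lucasU_one hρ, lucasU_two hρ]
  ring

theorem im_mul_quotCoeff (hρ : ρ.im ≠ 0) (c : ℕ → ℝ) (j : ℕ) :
    ρ.im * quotCoeff c ρ j = (∑ m ∈ range (j + 1), (c m : ℂ) * ρ ^ (j - m + 1)).im := by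
  simp only [quotCoeff, lucasU, mul_sum, Complex.im_sum, Complex.im_ofReal_mul]
  refine sum_congr rfl fun m _ => ?_
  field_simp

theorem quotCoeff_eq_zero_of_root (hρ : ρ.im ≠ 0) {N : ℕ}
    (hroot : ∑ m ∈ range (N + 2), (c m : ℂ) * ρ ^ (N + 1 - m) = 0) :
    quotCoeff c ρ N = 0 ∧ quotCoeff c ρ (N + 1) = 0 := by
  constructor
  · have hsum : ∑ m ∈ range (N + 1), (c m : ℂ) * ρ ^ (N - m + 1) = -c (N + 1) := by
      rw [sum_range_succ, Nat.sub_self, pow_zero, mul_one] at hroot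
      rw [eq_neg_iff_add_eq_zero, ← hroot]
      congr 1
      refine sum_congr rfl fun m hm => ?_
      rw [show N - m + 1 = N + 1 - m by have := mem_range.1 hm; omega]
    have := im_mul_quotCoeff hρ c N
    rw [hsum, Complex.neg_im, Complex.ofReal_im, neg_zero] at this
    exact (mul_eq_zero.1 this).resolve_left hρ
  · have hsum : ∑ m ∈ range (N + 1 + 1), (c m : ℂ) * ρ ^ (N + 1 - m + 1) = 0 := by
      simp only [pow_succ, ← mul_assoc, ← sum_mul, hroot, zero_mul]
    have := im_mul_quotCoeff hρ c (N + 1)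
    rw [hsum, Complex.zero_im] at this
    exact (mul_eq_zero.1 this).resolve_left hρ

theorem sum_range_mul_eq_sum_range_quotCoeff_mul_quadShift (hρ : ρ.im ≠ 0) {N : ℕ}
    (hroot : ∑ m ∈ range (N + 2), (c m : ℂ) * ρ ^ (N + 1 - m) = 0) (x : ℤ → ℝ) (n : ℤ) :
    ∑ i ∈ range (N + 2), c i * x (n - i) =
      ∑ j ∈ range N, quotCoeff c ρ j * quadShift (2 * ρ.re) (Complex.normSq ρ) x (n - j) := by
  obtain ⟨hN, hN1⟩ := quotCoeff_eq_zero_of_root hρ hroot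
  rw [sum_range_mul_eq_sum_range_mul_quadShift (s := 2 * ρ.re) (t := Complex.normSq ρ)
    (d := quotCoeff c ρ) (quotCoeff_zero hρ).symm
    (by rw [quotCoeff_one hρ, quotCoeff_zero hρ]; ring)
    (fun i => by rw [quotCoeff_add_two hρ]; ring), hN, hN1]
  ring

end Lucas

section Rho

variable {μ θ : ℝ}

theorem rho_re (μ θ : ℝ) : (rho μ θ).re = μ * Real.cos θ := by
  simp only [rho, Complex.mul_re, Complex.add_re, Complex.ofReal_re, Complex.ofReal_im,
    Complex.I_re, Complex.I_im, Complex.mul_im, Complex.add_im]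
  ring

theorem rho_im (μ θ : ℝ) : (rho μ θ).im = μ * Real.sin θ := by
  simp only [rho, Complex.mul_im, Complex.add_re, Complex.add_im, Complex.ofReal_re,
    Complex.ofReal_im, Complex.mul_re, Complex.I_re, Complex.I_im]
  ring

theorem normSq_rho (μ θ : ℝ) : Complex.normSq (rho μ θ) = μ ^ 2 := by
  rw [Complex.normSq_apply, rho_re, rho_im]
  linear_combination μ ^ 2 * Real.sin_sq_add_cos_sq θ

theorem rho_pow_im (μ θ : ℝ) (n : ℕ) : (rho μ θ ^ n).im = μ ^ n * Real.sin (n * θ) := by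
  rw [rho, mul_pow, Complex.ofReal_cos, Complex.ofReal_sin, Complex.cos_add_sin_mul_I_pow,
    ← Complex.ofReal_pow, Complex.im_ofReal_mul, ← Complex.ofReal_natCast, ← Complex.ofReal_mul,
    ← Complex.ofReal_cos, ← Complex.ofReal_sin]
  simp only [Complex.add_im, Complex.ofReal_im, Complex.mul_im, Complex.ofReal_re, Complex.I_re,
    Complex.I_im]
  ring

theorem rho_im_ne_zero (hμ : μ ≠ 0) (hθ : Real.sin θ ≠ 0) : (rho μ θ).im ≠ 0 := by
  rw [rho_im]
  exact mul_ne_zero hμ hθ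

theorem lucasU_rho_succ (hμ : μ ≠ 0) (n : ℕ) :
    lucasU (rho μ θ) (n + 1) = μ ^ n * Real.sin (((n + 1 : ℕ) : ℝ) * θ) / Real.sin θ := by
  rw [lucasU, rho_pow_im, rho_im, pow_succ]
  field_simp

theorem realQ'_eq_quotCoeff (hμ : μ ≠ 0) (b : ℕ → ℝ) (j : ℕ) :
    realQ' b μ θ j = quotCoeff b (rho μ θ) j := by
  simp only [realQ', quotCoeff, lucasU_rho_succ hμ, mul_sum]
  refine sum_congr rfl fun m _ => ?_
  ring

/-- The coefficients of the reflected polynomial `u^(k+1) P(1/u) = 1 - ∑ aᵢ u^(i+1)`. -/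
def revCoeffP (a : ℕ → ℝ) : ℕ → ℝ
  | 0 => 1
  | i + 1 => -a i

theorem realP'_eq_quotCoeff (hμ : μ ≠ 0) (a : ℕ → ℝ) (j : ℕ) :
    realP' a μ θ j = quotCoeff (revCoeffP a) (rho μ θ) (j + 1) := by
  rw [quotCoeff, sum_range_succ', realP']
  simp only [revCoeffP, Nat.add_sub_add_right, lucasU_rho_succ hμ, mul_sum]
  rw [show j + 1 - 0 = j + 1 from rfl, show j + 1 + 1 = j + 2 from rfl, one_mul,
    sub_eq_add_neg, ← sum_neg_distrib, add_comm _ (∑ m ∈ range (j + 1), _)]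
  exact congrArg (· + _) (sum_congr rfl fun m _ => by ring)

end Rho

section Reduction

variable {k : ℕ} {μ θ : ℝ}

theorem sum_mul_eq_sum_realQ'_mul_quadShift (hk : 1 ≤ k) (hμ : μ ≠ 0) (hθ : Real.sin θ ≠ 0)
    {b : ℕ → ℝ} (hQ : (polyQ k (fun i => (b i : ℂ))).eval (rho μ θ) = 0) (x : ℤ → ℝ) (n : ℤ) :
    ∑ i ∈ range (k + 1), b i * x (n - i) =
      ∑ j ∈ range (k - 1), realQ' b μ θ j * quadShift (2 * μ * Real.cos θ) (μ ^ 2) x (n - j) := by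
  obtain ⟨N, rfl⟩ : ∃ N, k = N + 1 := ⟨k - 1, by omega⟩
  have hroot : ∑ m ∈ range (N + 2), (b m : ℂ) * rho μ θ ^ (N + 1 - m) = 0 := by
    simpa [polyQ, eval_finsetSum] using hQ
  rw [sum_range_mul_eq_sum_range_quotCoeff_mul_quadShift (rho_im_ne_zero hμ hθ) hroot, rho_re,
    normSq_rho, Nat.add_sub_cancel, ← mul_assoc]
  simp only [realQ'_eq_quotCoeff hμ]

theorem sub_sum_mul_eq_quadShift_add_sum_realP'_mul (hk : 1 ≤ k) (hμ : μ ≠ 0)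
    (hθ : Real.sin θ ≠ 0) {a : ℕ → ℝ} (hP : (polyP k (fun i => (a i : ℂ))).eval (rho μ θ) = 0)
    (x : ℤ → ℝ) (n : ℤ) :
    x (n + 1) - ∑ i ∈ range (k + 1), a i * x (n - i) =
      quadShift (2 * μ * Real.cos θ) (μ ^ 2) x (n + 1) +
        ∑ j ∈ range (k - 1), realP' a μ θ j * quadShift (2 * μ * Real.cos θ) (μ ^ 2) x (n - j) := by
  obtain ⟨N, rfl⟩ : ∃ N, k = N + 1 := ⟨k - 1, by omega⟩
  have hroot : ∑ m ∈ range (N + 1 + 2), (revCoeffP a m : ℂ) * rho μ θ ^ (N + 1 + 1 - m) = 0 := by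
    simp only [polyP, eval_sub, eval_pow, eval_X, eval_finsetSum, eval_mul, eval_C] at hP
    rw [sum_range_succ', ← hP]
    simp only [revCoeffP, Nat.add_sub_add_right, Nat.sub_zero, Complex.ofReal_neg,
      Complex.ofReal_one, neg_mul, one_mul, sum_neg_distrib]
    ring
  have h := sum_range_mul_eq_sum_range_quotCoeff_mul_quadShift (rho_im_ne_zero hμ hθ) hroot x (n + 1)
  rw [sum_range_succ', sum_range_succ' _ N] at h
  simp only [revCoeffP, quotCoeff_zero (rho_im_ne_zero hμ hθ), ← realP'_eq_quotCoeff hμ, rho_re,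
    normSq_rho, Nat.cast_add, Nat.cast_one, Nat.cast_zero, add_sub_add_right_eq_sub, sub_zero,
    one_mul, neg_mul, sum_neg_distrib] at h
  rw [Nat.add_sub_cancel, show N + 1 + 1 = N + 2 from rfl, mul_assoc]
  linarith

theorem isSolutionStarR_of_quadShift_eq (hk : 1 ≤ k) (hμ : μ ≠ 0) (hθ : Real.sin θ ≠ 0)
    {a b : ℕ → ℝ} {g : ℤ → ℝ → ℝ} (hP : (polyP k (fun i => (a i : ℂ))).eval (rho μ θ) = 0)
    (hQ : (polyQ k (fun i => (b i : ℂ))).eval (rho μ θ) = 0) {r : ℤ → ℝ}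
    (hr : IsSolutionFE1R k a b g μ θ r) {x : ℤ → ℝ}
    (hx : ∀ n, -(k : ℤ) + 2 ≤ n → quadShift (2 * μ * Real.cos θ) (μ ^ 2) x n = r n) :
    IsSolutionStarR k a b g x := by
  intro n hn
  have hsum (c : ℕ → ℝ) : ∑ j ∈ range (k - 1), c j * quadShift (2 * μ * Real.cos θ) (μ ^ 2) x (n - j)
      = ∑ j ∈ range (k - 1), c j * r (n - j) :=
    sum_congr rfl fun j hj => by rw [hx _ (by have := mem_range.1 hj; omega)]
  have hPx := sub_sum_mul_eq_quadShift_add_sum_realP'_mul hk hμ hθ hP x n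
  rw [hsum, hx _ (by omega)] at hPx
  rw [sum_mul_eq_sum_realQ'_mul_quadShift hk hμ hθ hQ, hsum]
  linarith [hr n hn]

end Reduction

/-- with `ρ = μ e^{iθ}` (`μ > 0`, `sin θ ≠ 0`) a common non-real root of
the complexified `P` and `Q` and `ρ^p ≠ 1`, if the real second factor equation (FE1)
has a solution periodic with prime (minimal) period `p`, then equation (★) has a real
solution periodic with prime period `p`. -/
theorem statement17 (k : ℕ) (hk : 2 ≤ k) (a b : ℕ → ℝ) (g : ℤ → ℝ → ℝ) (μ θ : ℝ)
    (hμ : 0 < μ) (hθ : Real.sin θ ≠ 0)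
    (hP : (polyP k (fun i => (a i : ℂ))).eval (rho μ θ) = 0)
    (hQ : (polyQ k (fun i => (b i : ℂ))).eval (rho μ θ) = 0)
    (p : ℕ) (hp : 0 < p) (hρp : (rho μ θ) ^ p ≠ 1)
    (r : ℤ → ℝ) (hr : IsSolutionFE1R k a b g μ θ r)
    (hper : ∀ n : ℤ, -(k : ℤ) + 2 ≤ n → r (n + p) = r n)
    (hmin : ∀ q : ℕ, 0 < q → (∀ n : ℤ, -(k : ℤ) + 2 ≤ n → r (n + q) = r n) → p ≤ q) :
    ∃ x : ℤ → ℝ, IsSolutionStarR k a b g x ∧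
      (∀ n : ℤ, -(k : ℤ) ≤ n → x (n + p) = x n) ∧
      (∀ q : ℕ, 0 < q → (∀ n : ℤ, -(k : ℤ) ≤ n → x (n + q) = x n) → p ≤ q) := by
  obtain ⟨r', hr'per, hr'r⟩ := exists_periodic_eq_of_eventually hp hper
  obtain ⟨x, hxper, hxr'⟩ := exists_periodic_quadShift_eq hρp hr'per
  rw [rho_re, normSq_rho, ← mul_assoc] at hxr'
  have hxr (n : ℤ) (hn : -(k : ℤ) + 2 ≤ n) : quadShift (2 * μ * Real.cos θ) (μ ^ 2) x n = r n :=
    (hxr' n).trans (hr'r n hn)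
  refine ⟨x, isSolutionStarR_of_quadShift_eq (by omega) hμ.ne' hθ hP hQ hr hxr,
    fun n _ => hxper n, fun q hq hxq => hmin q hq fun n hn => ?_⟩
  rw [← hxr n hn, ← hxr (n + q) (by omega)]
  exact quadShift_add_eq_of_add_eq hxq n hn
end
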